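/- (Vector-valued Burkholder-type inequality.) Let p ∈ (1,2] and let X_0, …, X_{T−1} be R^d-valued random variables such that E[X_k | X_0,…,X_{k−1}] = 0 and E[‖X_k‖^p] < ∞ for each k. Then E[‖∑_{k=0}^{T−1} X_k‖^p] ≤ 2^{2−p} · ∑_{k=0}^{T−1} E[‖X_k‖^p]. -/

import Mathlib

/-!
For `1 < p ≤ 2` and vectors `x, y` of a real inner product space,
`‖x + y‖ ^ p ≤ ‖x‖ ^ p + p ‖x‖ ^ (p - 2) ⟪x, y⟫ + 2 ^ (2 - p) ‖y‖ ^ p`: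
after normalising `‖x‖ = 1` this is a two-variable inequality, obtained from the concavity of
`s ↦ s ^ (p / 2)` together with a one-variable monotonicity argument. Applied with `x` the partial
sum `S_k` and `y = X_k`, the linear term `⟪‖S_k‖ ^ (p - 2) • S_k, X_k⟫` has expectation zero because
`S_k` is measurable for the past and `E[X_k | past] = 0` (Hölder makes it integrable). Summing over
`k` gives the inequality.
-/

open MeasureTheory Real
open scoped ENNReal RealInnerProductSpace

lemma rpow_le_tangent {A B c : ℝ} (hA : 0 ≤ A) (hB : 0 < B) (hc0 : 0 ≤ c) (hc1 : c ≤ 1) :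
    A ^ c ≤ B ^ c + c * B ^ (c - 1) * (A - B) := by
  have hAB : 0 ≤ A / B := div_nonneg hA hB.le
  have bernoulli := rpow_one_add_le_one_add_mul_self (s := A / B - 1) (by linarith) hc0 hc1
  rw [add_sub_cancel] at bernoulli
  calc A ^ c = B ^ c * (A / B) ^ c := by rw [← mul_rpow hB.le hAB, mul_div_cancel₀ _ hB.ne']
    _ ≤ B ^ c * (1 + c * (A / B - 1)) := by gcongr
    _ = B ^ c + c * B ^ (c - 1) * (A - B) := by
      rw [rpow_sub_one hB.ne']; field_simp

lemma rpow_add_rpow_le_two_rpow_mul_add_rpow {a b q : ℝ} (ha : 0 ≤ a) (hb : 0 ≤ b)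
    (hq0 : 0 ≤ q) (hq1 : q ≤ 1) : a ^ q + b ^ q ≤ 2 ^ (1 - q) * (a + b) ^ q := by
  have midpoint := (concaveOn_rpow hq0 hq1).2 (Set.mem_Ici.2 ha) (Set.mem_Ici.2 hb)
    (by norm_num : (0 : ℝ) ≤ 1 / 2) (by norm_num : (0 : ℝ) ≤ 1 / 2) (by norm_num)
  simp only [smul_eq_mul] at midpoint
  have half : 1 / 2 * a + 1 / 2 * b = (a + b) / 2 := by ring
  rw [half, div_rpow (by positivity) zero_le_two] at midpoint
  have two_rpow : (2 : ℝ) ^ (1 - q) * 2 ^ q = 2 := by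
    rw [← rpow_add zero_lt_two]; norm_num
  have := rpow_pos_of_pos zero_lt_two q
  field_simp at midpoint
  nlinarith [rpow_nonneg (add_nonneg ha hb) q]

lemma sub_one_rpow_add_mul_le {p b : ℝ} (hp1 : 1 < p) (hp2 : p ≤ 2) (hb : 1 ≤ b) :
    (b - 1) ^ p + p * b ≤ 1 + 2 ^ (2 - p) * b ^ p := by
  set H : ℝ → ℝ := fun x => 1 + 2 ^ (2 - p) * x ^ p - (x - 1) ^ p - p * x
  have hH : ∀ x, HasDerivAt H (p * (2 ^ (2 - p) * x ^ (p - 1) - (x - 1) ^ (p - 1) - 1)) x := by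
    intro x
    have d1 := hasDerivAt_rpow_const (x := x) (Or.inr hp1.le)
    have d2 := ((hasDerivAt_id x).sub_const 1).rpow_const (p := p) (Or.inr hp1.le)
    exact ((((d1.const_mul (2 ^ (2 - p))).const_add 1).sub d2).sub
      ((hasDerivAt_id x).const_mul p)).congr_deriv (by simp only [id]; ring)
  have hH_mono : MonotoneOn H (Set.Ici 1) := by
    refine monotoneOn_of_hasDerivWithinAt_nonneg (convex_Ici 1)
      (fun x _ => (hH x).continuousAt.continuousWithinAt) (fun x _ => (hH x).hasDerivWithinAt)
      fun x hx => ?_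
    rw [interior_Ici] at hx
    have concave := rpow_add_rpow_le_two_rpow_mul_add_rpow (sub_nonneg.2 (le_of_lt hx))
      zero_le_one (by linarith : 0 ≤ p - 1) (by linarith : p - 1 ≤ 1)
    rw [one_rpow, sub_add_cancel, show 1 - (p - 1) = 2 - p by ring] at concave
    exact mul_nonneg (by linarith) (by linarith)
  have hH_one : 0 ≤ H 1 := by
    have : (1 : ℝ) ≤ 2 ^ (2 - p) := one_le_rpow one_le_two (by linarith)
    simp only [H, one_rpow, sub_self, zero_rpow (by linarith : p ≠ 0)]
    linarith
  have := hH_mono Set.self_mem_Ici hb hb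
  simp only [H] at this ⊢
  linarith

lemma sq_rpow_div_two {x : ℝ} (hx : 0 ≤ x) (r : ℝ) : (x ^ 2) ^ (r / 2) = x ^ r := by
  rw [← rpow_natCast_mul hx, Nat.cast_ofNat, mul_div_cancel₀ r two_ne_zero]

lemma one_add_two_mul_add_sq_rpow_le {p b t : ℝ} (hp1 : 1 < p) (hp2 : p ≤ 2) (ht : |t| ≤ b) :
    (1 + 2 * t + b ^ 2) ^ (p / 2) ≤ 1 + p * t + 2 ^ (2 - p) * b ^ p := by
  have hb : 0 ≤ b := (abs_nonneg t).trans ht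
  obtain ⟨htb, -⟩ := abs_le.1 ht
  have hA : 0 ≤ 1 + 2 * t + b ^ 2 := by nlinarith [sq_nonneg (1 - b)]
  rcases le_or_gt b 2 with hb2 | hb2
  · have tangent := rpow_le_tangent hA one_pos (by linarith : 0 ≤ p / 2) (by linarith)
    have quadratic : p / 2 * b ^ 2 ≤ 2 ^ (2 - p) * b ^ p := by
      rw [← rpow_two, ← sub_add_cancel (2 : ℝ) p, rpow_add' hb (by norm_num), sub_add_cancel,
        ← mul_assoc]
      have : b ^ (2 - p) ≤ 2 ^ (2 - p) := rpow_le_rpow hb hb2 (by linarith)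
      have := rpow_nonneg hb (2 - p)
      gcongr
      nlinarith
    rw [one_rpow, one_rpow] at tangent
    linarith
  · have hb1 : 0 ≤ b - 1 := by linarith
    have tangent := rpow_le_tangent hA (pow_pos (by linarith : 0 < b - 1) 2)
      (by linarith : 0 ≤ p / 2) (by linarith)
    rw [sq_rpow_div_two hb1, show p / 2 - 1 = (p - 2) / 2 by ring, sq_rpow_div_two hb1,
      show 1 + 2 * t + b ^ 2 - (b - 1) ^ 2 = 2 * (t + b) by ring] at tangent
    have : (b - 1) ^ (p - 2) ≤ 1 := rpow_le_one_of_one_le_of_nonpos (by linarith) (by linarith)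
    have := mul_le_mul_of_nonneg_right this (by nlinarith : 0 ≤ p * (t + b))
    linarith [sub_one_rpow_add_mul_le hp1 hp2 (by linarith : 1 ≤ b)]

lemma norm_add_rpow_le {E : Type*} [NormedAddCommGroup E] [InnerProductSpace ℝ E] {p : ℝ}
    (hp1 : 1 < p) (hp2 : p ≤ 2) (x y : E) :
    ‖x + y‖ ^ p ≤ ‖x‖ ^ p + p * ‖x‖ ^ (p - 2) * ⟪x, y⟫ + 2 ^ (2 - p) * ‖y‖ ^ p := by
  rcases eq_or_ne x 0 with rfl | hx
  · have : (1 : ℝ) ≤ 2 ^ (2 - p) := one_le_rpow one_le_two (by linarith)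
    simp only [zero_add, norm_zero, zero_rpow (by linarith : p ≠ 0), inner_zero_left, mul_zero]
    nlinarith [rpow_nonneg (norm_nonneg y) p]
  have ha : 0 < ‖x‖ := norm_pos_iff.2 hx
  have ht : |⟪x, y⟫ / ‖x‖ ^ 2| ≤ ‖y‖ / ‖x‖ := by
    rw [abs_div, abs_of_pos (pow_pos ha 2), div_le_div_iff₀ (by positivity) ha]
    nlinarith [mul_le_mul_of_nonneg_right (abs_real_inner_le_norm x y) ha.le]
  have hA : 0 ≤ 1 + 2 * (⟪x, y⟫ / ‖x‖ ^ 2) + (‖y‖ / ‖x‖) ^ 2 := by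
    nlinarith [abs_le.1 ht, sq_nonneg (1 - ‖y‖ / ‖x‖)]
  have hsq : ‖x + y‖ ^ 2 = ‖x‖ ^ 2 * (1 + 2 * (⟪x, y⟫ / ‖x‖ ^ 2) + (‖y‖ / ‖x‖) ^ 2) := by
    rw [norm_add_sq_real]; field_simp
  calc ‖x + y‖ ^ p
      = ‖x‖ ^ p * (1 + 2 * (⟪x, y⟫ / ‖x‖ ^ 2) + (‖y‖ / ‖x‖) ^ 2) ^ (p / 2) := by
        rw [← sq_rpow_div_two (norm_nonneg _), hsq, mul_rpow (by positivity) hA,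
          sq_rpow_div_two ha.le]
    _ ≤ ‖x‖ ^ p * (1 + p * (⟪x, y⟫ / ‖x‖ ^ 2) + 2 ^ (2 - p) * (‖y‖ / ‖x‖) ^ p) := by
        gcongr; exact one_add_two_mul_add_sq_rpow_le hp1 hp2 ht
    _ = ‖x‖ ^ p + p * ‖x‖ ^ (p - 2) * ⟪x, y⟫ + 2 ^ (2 - p) * ‖y‖ ^ p := by
        rw [rpow_sub ha, rpow_two, div_rpow (norm_nonneg _) ha.le]
        have := rpow_pos_of_pos ha p
        field_simp

section

variable {Ω E : Type*} [NormedAddCommGroup E] {m m0 : MeasurableSpace Ω} {μ : Measure Ω}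

lemma integral_inner_eq_zero_of_condExp_eq_zero [InnerProductSpace ℝ E] [CompleteSpace E]
    (hm : m ≤ m0) [SigmaFinite (μ.trim hm)] {V X : Ω → E} (hV : StronglyMeasurable[m] V)
    (hVX : Integrable (fun ω => ⟪V ω, X ω⟫) μ) (hX : Integrable X μ)
    (hcond : μ[X | m] =ᵐ[μ] 0) :
    ∫ ω, ⟪V ω, X ω⟫ ∂μ = 0 := by
  have pull_out := condExp_bilin_of_stronglyMeasurable_left (m := m) (innerSL ℝ) hV hVX hX
  calc ∫ ω, ⟪V ω, X ω⟫ ∂μ = ∫ ω, (μ[fun ω => innerSL ℝ (V ω) (X ω) | m]) ω ∂μ :=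
        (integral_condExp hm).symm
    _ = ∫ ω, innerSL ℝ (V ω) ((μ[X | m]) ω) ∂μ := integral_congr_ae pull_out
    _ = 0 := integral_eq_zero_of_ae (by filter_upwards [hcond] with ω hω; simp [hω])

lemma norm_rpow_sub_two_smul [NormedSpace ℝ E] {p : ℝ} (hp : 1 < p) (x : E) :
    ‖‖x‖ ^ (p - 2) • x‖ = ‖x‖ ^ (p - 1) := by
  rw [norm_smul, norm_of_nonneg (rpow_nonneg (norm_nonneg x) _),
    ← rpow_add_one' (norm_nonneg x) (by linarith)]
  congr 1; ring

lemma integrable_norm_rpow_of_memLp {p : ℝ} (hp : 0 < p) {f : Ω → E}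
    (hf : MemLp f (ENNReal.ofReal p) μ) : Integrable (fun ω => ‖f ω‖ ^ p) μ := by
  simpa [hp.le] using hf.integrable_norm_rpow (by simpa using hp) ENNReal.ofReal_ne_top

lemma integrable_inner_rpow_sub_two_smul [InnerProductSpace ℝ E] {p : ℝ} (hp : 1 < p)
    {S X : Ω → E}
    (hS : MemLp S (ENNReal.ofReal p) μ) (hX : MemLp X (ENNReal.ofReal p) μ) :
    Integrable (fun ω => ⟪‖S ω‖ ^ (p - 2) • S ω, X ω⟫) μ := by
  have hconj :
      (ENNReal.ofReal p / ENNReal.ofReal (p - 1)).HolderConjugate (ENNReal.ofReal p) := by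
    rw [← ENNReal.ofReal_div_of_pos (by linarith)]
    exact (HolderConjugate.conjExponent hp).symm.ennrealOfReal
  have hV : MemLp (fun ω => ‖S ω‖ ^ (p - 2) • S ω)
      (ENNReal.ofReal p / ENNReal.ofReal (p - 1)) μ := by
    refine (hS.norm_rpow_div (ENNReal.ofReal (p - 1))).congr_norm
      ((hS.1.norm.aemeasurable.pow_const _).aestronglyMeasurable.smul hS.1)
      (ae_of_all _ fun ω => ?_)
    rw [norm_rpow_sub_two_smul hp, ENNReal.toReal_ofReal (by linarith),
      norm_of_nonneg (rpow_nonneg (norm_nonneg _) _)]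
  exact memLp_one_iff_integrable.1 ((innerSL ℝ).memLp_of_bilin 1 hV hX)

lemma integral_norm_add_rpow_le [InnerProductSpace ℝ E] [CompleteSpace E] [IsFiniteMeasure μ]
    (hm : m ≤ m0) {p : ℝ} (hp1 : 1 < p) (hp2 : p ≤ 2) {S X : Ω → E}
    (hS : MemLp S (ENNReal.ofReal p) μ) (hSm : StronglyMeasurable[m] S)
    (hX : MemLp X (ENNReal.ofReal p) μ) (hcond : μ[X | m] =ᵐ[μ] 0) :
    ∫ ω, ‖S ω + X ω‖ ^ p ∂μ ≤ ∫ ω, ‖S ω‖ ^ p ∂μ + 2 ^ (2 - p) * ∫ ω, ‖X ω‖ ^ p ∂μ := by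
  have hp0 : 0 < p := by linarith
  set V := fun ω => ‖S ω‖ ^ (p - 2) • S ω
  have hVm : StronglyMeasurable[m] V :=
    (hSm.norm.measurable.pow_const _).stronglyMeasurable.smul hSm
  have hVX := integrable_inner_rpow_sub_two_smul hp1 hS hX
  have orthogonal : ∫ ω, ⟪V ω, X ω⟫ ∂μ = 0 :=
    integral_inner_eq_zero_of_condExp_eq_zero hm hVm hVX
      (hX.integrable (ENNReal.one_le_ofReal.2 hp1.le)) hcond
  have hSp := integrable_norm_rpow_of_memLp hp0 hS
  have hXp := integrable_norm_rpow_of_memLp hp0 hX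
  have hVXp : Integrable (fun ω => p * ⟪V ω, X ω⟫) μ := hVX.const_mul p
  have hSV : Integrable (fun ω => ‖S ω‖ ^ p + p * ⟪V ω, X ω⟫) μ := hSp.add hVXp
  calc ∫ ω, ‖S ω + X ω‖ ^ p ∂μ
      ≤ ∫ ω, (‖S ω‖ ^ p + p * ⟪V ω, X ω⟫ + 2 ^ (2 - p) * ‖X ω‖ ^ p) ∂μ := by
        refine integral_mono (integrable_norm_rpow_of_memLp hp0 (hS.add hX))
          (hSV.add (hXp.const_mul _)) fun ω => ?_
        simpa only [V, real_inner_smul_left, mul_assoc] using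
          norm_add_rpow_le hp1 hp2 (S ω) (X ω)
    _ = ∫ ω, ‖S ω‖ ^ p ∂μ + p * ∫ ω, ⟪V ω, X ω⟫ ∂μ
          + 2 ^ (2 - p) * ∫ ω, ‖X ω‖ ^ p ∂μ := by
        rw [integral_add hSV (hXp.const_mul _), integral_add hSp hVXp, integral_const_mul,
          integral_const_mul]
    _ = ∫ ω, ‖S ω‖ ^ p ∂μ + 2 ^ (2 - p) * ∫ ω, ‖X ω‖ ^ p ∂μ := by
        rw [orthogonal, mul_zero, add_zero]

theorem integral_norm_sum_rpow_le [InnerProductSpace ℝ E] [CompleteSpace E] [IsFiniteMeasure μ]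
    {p : ℝ} (hp1 : 1 < p) (hp2 : p ≤ 2) {T : ℕ} {X : ℕ → Ω → E} (F : ℕ → MeasurableSpace Ω)
    (hF : ∀ k < T, F k ≤ m0) (hXF : ∀ k < T, ∀ i < k, StronglyMeasurable[F k] (X i))
    (hX : ∀ k < T, MemLp (X k) (ENNReal.ofReal p) μ) (hcond : ∀ k < T, μ[X k | F k] =ᵐ[μ] 0) :
    ∫ ω, ‖∑ k ∈ Finset.range T, X k ω‖ ^ p ∂μ
      ≤ 2 ^ (2 - p) * ∑ k ∈ Finset.range T, ∫ ω, ‖X k ω‖ ^ p ∂μ := by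
  induction T with
  | zero => simp [zero_rpow (by linarith : p ≠ 0)]
  | succ n ih =>
    have ih := ih (fun k hk => hF k (by omega)) (fun k hk => hXF k (by omega))
      (fun k hk => hX k (by omega)) (fun k hk => hcond k (by omega))
    have step := integral_norm_add_rpow_le (S := fun ω => ∑ k ∈ Finset.range n, X k ω)
      (hF n n.lt_succ_self) hp1 hp2
      (memLp_finsetSum _ fun k hk => hX k ((Finset.mem_range.1 hk).trans n.lt_succ_self))
      (Finset.stronglyMeasurable_fun_sum _ fun i hi =>
        hXF n n.lt_succ_self i (Finset.mem_range.1 hi))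
      (hX n n.lt_succ_self) (hcond n n.lt_succ_self)
    simp only [Finset.sum_range_succ]
    linarith

lemma ofReal_integral_norm_rpow_of_memLp {p : ℝ} (hp : 0 < p) {f : Ω → E}
    (hf : MemLp f (ENNReal.ofReal p) μ) :
    ENNReal.ofReal (∫ ω, ‖f ω‖ ^ p ∂μ) = ∫⁻ ω, ‖f ω‖ₑ ^ p ∂μ := by
  rw [ofReal_integral_eq_lintegral_ofReal (integrable_norm_rpow_of_memLp hp hf)
    (ae_of_all _ fun ω => rpow_nonneg (norm_nonneg _) _)]
  simp_rw [← ENNReal.ofReal_rpow_of_nonneg (norm_nonneg _) hp.le, ofReal_norm]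

lemma memLp_ofReal_of_lintegral_rpow_lt_top {p : ℝ} (hp : 0 < p) {f : Ω → E}
    (hf : AEStronglyMeasurable f μ) (hfp : ∫⁻ ω, ‖f ω‖ₑ ^ p ∂μ < ∞) :
    MemLp f (ENNReal.ofReal p) μ := by
  refine ⟨hf, (eLpNorm_lt_top_iff_lintegral_rpow_enorm_lt_top (by simpa using hp)
    ENNReal.ofReal_ne_top).2 ?_⟩
  rwa [ENNReal.toReal_ofReal hp.le]

end

/-- Vector-valued Burkholder-type inequality for martingale difference
sequences in `ℝ^d`. -/
theorem vector_burkholder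
    {Ω : Type*} [m0 : MeasurableSpace Ω] (μ : Measure Ω) [IsProbabilityMeasure μ]
    (d : ℕ) (p : ℝ) (hp1 : 1 < p) (hp2 : p ≤ 2)
    (T : ℕ) (X : ℕ → Ω → EuclideanSpace ℝ (Fin d))
    (hmeas : ∀ k < T, Measurable (X k))
    (hmom : ∀ k < T, ∫⁻ ω, (‖X k ω‖₊ : ℝ≥0∞) ^ p ∂μ < ⊤)
    (hcond : ∀ k < T,
      μ[X k | ⨆ i ∈ Finset.range k, MeasurableSpace.comap (X i) inferInstance]
        =ᵐ[μ] 0) :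
    ∫⁻ ω, (‖∑ k ∈ Finset.range T, X k ω‖₊ : ℝ≥0∞) ^ p ∂μ
      ≤ ENNReal.ofReal ((2 : ℝ) ^ (2 - p)) *
        ∑ k ∈ Finset.range T, ∫⁻ ω, (‖X k ω‖₊ : ℝ≥0∞) ^ p ∂μ := by
  have hp0 : 0 < p := by linarith
  simp only [← enorm_eq_nnnorm] at hmom ⊢
  have hX : ∀ k < T, MemLp (X k) (ENNReal.ofReal p) μ := fun k hk =>
    memLp_ofReal_of_lintegral_rpow_lt_top hp0 (hmeas k hk).aestronglyMeasurable (hmom k hk)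
  let F : ℕ → MeasurableSpace Ω := fun k =>
    ⨆ i ∈ Finset.range k, MeasurableSpace.comap (X i) inferInstance
  have hF : ∀ k < T, F k ≤ m0 := fun k hk =>
    iSup₂_le fun i hi => (hmeas i ((Finset.mem_range.1 hi).trans hk)).comap_le
  have hXF : ∀ k < T, ∀ i < k, StronglyMeasurable[F k] (X i) := fun k _ i hi =>
    (Measurable.of_comap_le (le_iSup₂_of_le i (Finset.mem_range.2 hi) le_rfl)).stronglyMeasurable
  have bound := integral_norm_sum_rpow_le hp1 hp2 F hF hXF hX hcond
  have hsum : MemLp (fun ω => ∑ k ∈ Finset.range T, X k ω) (ENNReal.ofReal p) μ :=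
    memLp_finsetSum _ fun k hk => hX k (Finset.mem_range.1 hk)
  rw [← ofReal_integral_norm_rpow_of_memLp hp0 hsum, ← Finset.sum_congr rfl fun k hk =>
      ofReal_integral_norm_rpow_of_memLp hp0 (hX k (Finset.mem_range.1 hk)),
    ← ENNReal.ofReal_sum_of_nonneg fun k _ => integral_nonneg fun ω => by positivity,
    ← ENNReal.ofReal_mul (by positivity)]
  exact ENNReal.ofReal_le_ofReal bound
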